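/- Let 1 < p ≤ 2, let w > 0 and c > 0 with (p-1)c^2/4 ≤ w^2, and let x', y' ∈ ℝ^t satisfy ‖x'-y'‖_p ≥ c. Then the intersection B_p(x', w) ∩ B_p(y', w) is contained in the ℓ_p ball of radius w·√(1-(p-1)c²/(4w²)) centered at (x'+y')/2. -/

import Mathlib

noncomputable def pnorm (p : ℝ) {t : ℕ} (x : Fin t → ℝ) : ℝ :=
  (∑ i, |x i| ^ p) ^ (1 / p)

noncomputable def ballp (p : ℝ) {t : ℕ} (c : Fin t → ℝ) (R : ℝ) : Set (Fin t → ℝ) :=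
  {z | pnorm p (z - c) ≤ R}

/-! The heart of the matter is the 2-uniform convexity of `ℓ_p` for `1 ≤ p ≤ 2`:
`‖x‖² + (p - 1)‖y‖² ≤ (‖x + y‖² + ‖x - y‖²) / 2`.
Its one-dimensional case `(a² + (p - 1)b²)^(p/2) ≤ (|a + b|^p + |a - b|^p) / 2` reduces, after
writing `b = s a` with `|s| ≤ 1`, to Bernoulli's inequality and the bound
`1 + p(p - 1)t²/2 ≤ ((1 + t)^p + (1 - t)^p) / 2` on `[0, 1]`, proved by differentiating twice.
Summing over coordinates, Minkowski's inequality in `ℓ^(2/p)` on the left and convexity of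
`u ↦ u^(2/p)` on the right give the vector inequality. For `z` in both balls, apply it to
`x = z - (x' + y')/2` and `y = (x' - y')/2`: then `x ± y` are `z - y'` and `z - x'`, and
`‖y‖ ≥ c/2` forces `‖x‖² ≤ w² - (p - 1)c²/4`. -/

open Real Set Finset

lemma two_le_one_add_rpow_add_one_sub_rpow {q s : ℝ} (hq : q ≤ 0) (hs0 : 0 ≤ s) (hs1 : s < 1) :
    2 ≤ (1 + s) ^ q + (1 - s) ^ q := by
  have ha : 0 < (1 + s) ^ q := by positivity
  have hb : 0 < (1 - s) ^ q := rpow_pos_of_pos (by linarith) q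
  have hab : 1 ≤ (1 + s) ^ q * (1 - s) ^ q := by
    rw [← mul_rpow (by linarith) (by linarith)]
    exact one_le_rpow_of_pos_of_le_one_of_nonpos (by nlinarith) (by nlinarith) hq
  nlinarith [sq_nonneg ((1 + s) ^ q - (1 - s) ^ q)]

lemma two_mul_mul_le_one_add_rpow_sub_one_sub_rpow {q t : ℝ} (hq0 : 0 ≤ q) (hq1 : q ≤ 1)
    (ht0 : 0 ≤ t) (ht1 : t ≤ 1) : 2 * q * t ≤ (1 + t) ^ q - (1 - t) ^ q := by
  have hmono : MonotoneOn (fun u : ℝ => (1 + u) ^ q - (1 - u) ^ q - 2 * q * u) (Icc 0 1) := by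
    refine monotoneOn_of_hasDerivWithinAt_nonneg (convex_Icc 0 1)
      (by fun_prop (disch := assumption)) (f' := fun s =>
        q * ((1 + s) ^ (q - 1) + (1 - s) ^ (q - 1) - 2)) (fun s hs => ?_) (fun s hs => ?_)
    all_goals rw [interior_Icc] at hs
    · have h1 := ((hasDerivAt_id' s).const_add 1).rpow_const (p := q) (Or.inl (by linarith [hs.1]))
      have h2 := ((hasDerivAt_id' s).const_sub 1).rpow_const (p := q) (Or.inl (by linarith [hs.2]))
      exact (((h1.sub h2).sub ((hasDerivAt_id' s).const_mul (2 * q))).congr_deriv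
        (by simp; ring)).hasDerivWithinAt
    · exact mul_nonneg hq0 (sub_nonneg.2 <|
        two_le_one_add_rpow_add_one_sub_rpow (by linarith) hs.1.le hs.2)
  simpa using hmono (left_mem_Icc.2 zero_le_one) ⟨ht0, ht1⟩ ht0

lemma one_add_mul_sq_le_one_add_rpow_add_one_sub_rpow {p t : ℝ} (hp1 : 1 ≤ p) (hp2 : p ≤ 2)
    (ht0 : 0 ≤ t) (ht1 : t ≤ 1) :
    1 + p * (p - 1) / 2 * t ^ 2 ≤ ((1 + t) ^ p + (1 - t) ^ p) / 2 := by
  have hp0 : 0 ≤ p := by linarith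
  have hmono : MonotoneOn
      (fun u : ℝ => ((1 + u) ^ p + (1 - u) ^ p) / 2 - p * (p - 1) / 2 * u ^ 2) (Icc 0 1) := by
    refine monotoneOn_of_hasDerivWithinAt_nonneg (convex_Icc 0 1)
      (by fun_prop (disch := assumption)) (f' := fun s =>
        p / 2 * ((1 + s) ^ (p - 1) - (1 - s) ^ (p - 1) - 2 * (p - 1) * s))
      (fun s hs => ?_) (fun s hs => ?_)
    all_goals rw [interior_Icc] at hs
    · have h1 := ((hasDerivAt_id' s).const_add 1).rpow_const (p := p) (Or.inl (by linarith [hs.1]))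
      have h2 := ((hasDerivAt_id' s).const_sub 1).rpow_const (p := p) (Or.inl (by linarith [hs.2]))
      exact ((((h1.add h2).div_const 2).sub ((hasDerivAt_pow 2 s).const_mul _)).congr_deriv
        (by simp; ring)).hasDerivWithinAt
    · exact mul_nonneg (by linarith) (sub_nonneg.2 <|
        two_mul_mul_le_one_add_rpow_sub_one_sub_rpow (by linarith) (by linarith) hs.1.le hs.2.le)
  have := hmono (left_mem_Icc.2 zero_le_one) ⟨ht0, ht1⟩ ht0
  norm_num at this
  linarith

lemma one_add_mul_sq_rpow_le {p s : ℝ} (hp1 : 1 ≤ p) (hp2 : p ≤ 2) (hs : |s| ≤ 1) :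
    (1 + (p - 1) * s ^ 2) ^ (p / 2) ≤ (|1 + s| ^ p + |1 - s| ^ p) / 2 := by
  have hsum : |1 + s| ^ p + |1 - s| ^ p = (1 + |s|) ^ p + (1 - |s|) ^ p := by
    rcases abs_le.1 hs with ⟨h1, h2⟩
    rcases le_total 0 s with h | h
    · rw [abs_of_nonneg h, abs_of_nonneg (by linarith), abs_of_nonneg (by linarith)]
    · rw [abs_of_nonpos h, abs_of_nonneg (by linarith), abs_of_nonneg (by linarith), add_comm,
        sub_neg_eq_add, ← sub_eq_add_neg]
  calc (1 + (p - 1) * s ^ 2) ^ (p / 2)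
      ≤ 1 + p / 2 * ((p - 1) * s ^ 2) :=
        rpow_one_add_le_one_add_mul_self (by nlinarith) (by linarith) (by linarith)
    _ = 1 + p * (p - 1) / 2 * |s| ^ 2 := by rw [sq_abs]; ring
    _ ≤ _ := hsum ▸ one_add_mul_sq_le_one_add_rpow_add_one_sub_rpow hp1 hp2 (abs_nonneg s) hs

lemma sq_add_mul_sq_rpow_le_of_abs_le {p a b : ℝ} (hp1 : 1 ≤ p) (hp2 : p ≤ 2) (hba : |b| ≤ |a|) :
    (a ^ 2 + (p - 1) * b ^ 2) ^ (p / 2) ≤ (|a + b| ^ p + |a - b| ^ p) / 2 := by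
  rcases eq_or_ne a 0 with rfl | ha
  · obtain rfl : b = 0 := abs_nonpos_iff.1 (by simpa using hba)
    simp [zero_rpow (by linarith : p / 2 ≠ 0), zero_rpow (by linarith : p ≠ 0)]
  set s := b / a with hs_def
  have hs : |s| ≤ 1 := by rw [abs_div]; exact div_le_one_of_le₀ hba (abs_nonneg a)
  have hab : a + b = a * (1 + s) := by rw [hs_def]; field_simp
  have hab' : a - b = a * (1 - s) := by rw [hs_def]; field_simp
  have hsq : a ^ 2 + (p - 1) * b ^ 2 = |a| ^ 2 * (1 + (p - 1) * s ^ 2) := by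
    rw [sq_abs, hs_def]; field_simp
  have habs : (|a| ^ 2) ^ (p / 2) = |a| ^ p := by
    rw [← rpow_natCast, ← rpow_mul (abs_nonneg a)]; congr 1; push_cast; ring
  calc (a ^ 2 + (p - 1) * b ^ 2) ^ (p / 2)
      = |a| ^ p * (1 + (p - 1) * s ^ 2) ^ (p / 2) := by
        rw [hsq, mul_rpow (by positivity) (by nlinarith [abs_le.1 hs]), habs]
    _ ≤ |a| ^ p * ((|1 + s| ^ p + |1 - s| ^ p) / 2) := by
        gcongr; exact one_add_mul_sq_rpow_le hp1 hp2 hs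
    _ = (|a + b| ^ p + |a - b| ^ p) / 2 := by
        rw [hab, hab', abs_mul, abs_mul, mul_rpow (abs_nonneg _) (abs_nonneg _),
          mul_rpow (abs_nonneg _) (abs_nonneg _)]
        ring

lemma sq_add_mul_sq_rpow_le {p : ℝ} (hp1 : 1 ≤ p) (hp2 : p ≤ 2) (a b : ℝ) :
    (a ^ 2 + (p - 1) * b ^ 2) ^ (p / 2) ≤ (|a + b| ^ p + |a - b| ^ p) / 2 := by
  rcases le_total |b| |a| with hba | hab
  · exact sq_add_mul_sq_rpow_le_of_abs_le hp1 hp2 hba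
  -- since `p - 1 ≤ 1`, giving the larger coordinate the weight `1` only increases the left side
  have hswap : a ^ 2 + (p - 1) * b ^ 2 ≤ b ^ 2 + (p - 1) * a ^ 2 := by
    nlinarith [sq_abs a, sq_abs b, mul_self_le_mul_self (abs_nonneg a) hab]
  calc (a ^ 2 + (p - 1) * b ^ 2) ^ (p / 2)
      ≤ (b ^ 2 + (p - 1) * a ^ 2) ^ (p / 2) := by gcongr
    _ ≤ (|b + a| ^ p + |b - a| ^ p) / 2 := sq_add_mul_sq_rpow_le_of_abs_le hp1 hp2 hab
    _ = (|a + b| ^ p + |a - b| ^ p) / 2 := by rw [add_comm b, abs_sub_comm]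

lemma Lp_pair_sum_le_sum_Lp_pair {ι : Type*} (s : Finset ι) {r : ℝ} (hr : 1 ≤ r) {f g : ι → ℝ}
    (hf : ∀ i, 0 ≤ f i) (hg : ∀ i, 0 ≤ g i) :
    ((∑ i ∈ s, f i) ^ r + (∑ i ∈ s, g i) ^ r) ^ (1 / r) ≤
      ∑ i ∈ s, (f i ^ r + g i ^ r) ^ (1 / r) := by
  have hr0 : r ≠ 0 := by positivity
  have key := le_sum_of_subadditive (fun v : ℝ × ℝ => (|v.1| ^ r + |v.2| ^ r) ^ (1 / r))
    (by simp [zero_rpow hr0, hr0]) (fun v w => by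
      simpa [Fin.sum_univ_two] using Real.Lp_add_le univ ![v.1, v.2] ![w.1, w.2] hr)
    s (fun i => (f i, g i))
  simpa [Prod.fst_sum, Prod.snd_sum, abs_of_nonneg, hf, hg, sum_nonneg] using key

lemma add_div_two_rpow_le {a b r : ℝ} (ha : 0 ≤ a) (hb : 0 ≤ b) (hr : 1 ≤ r) :
    ((a + b) / 2) ^ r ≤ (a ^ r + b ^ r) / 2 := by
  have := (convexOn_rpow hr).2 (mem_Ici.2 ha) (mem_Ici.2 hb) (by norm_num : (0:ℝ) ≤ 1 / 2)
    (by norm_num : (0:ℝ) ≤ 1 / 2) (by norm_num)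
  simp only [smul_eq_mul] at this
  rwa [show (a + b) / 2 = 1 / 2 * a + 1 / 2 * b by ring,
    show (a ^ r + b ^ r) / 2 = 1 / 2 * a ^ r + 1 / 2 * b ^ r by ring]

lemma rpow_rpow_div_cancel {a p q : ℝ} (ha : 0 ≤ a) (hp : p ≠ 0) : (a ^ p) ^ (q / p) = a ^ q := by
  rw [← rpow_mul ha, mul_div_cancel₀ _ hp]

section pnorm
variable {p : ℝ} {t : ℕ}

lemma pnorm_nonneg (x : Fin t → ℝ) : 0 ≤ pnorm p x := by
  unfold pnorm; positivity

lemma pnorm_rpow (hp : p ≠ 0) (x : Fin t → ℝ) : pnorm p x ^ p = ∑ i, |x i| ^ p := by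
  rw [pnorm, ← rpow_mul (by positivity), one_div_mul_cancel hp, rpow_one]

lemma pnorm_sq (x : Fin t → ℝ) : pnorm p x ^ 2 = (∑ i, |x i| ^ p) ^ (2 / p) := by
  rw [pnorm, ← rpow_natCast, ← rpow_mul (by positivity)]
  congr 1; push_cast; ring

lemma pnorm_smul (hp : 0 < p) (a : ℝ) (x : Fin t → ℝ) : pnorm p (a • x) = |a| * pnorm p x := by
  simp only [pnorm, Pi.smul_apply, smul_eq_mul, abs_mul, mul_rpow (abs_nonneg _) (abs_nonneg _),
    ← mul_sum]
  rw [mul_rpow (by positivity) (by positivity), ← rpow_mul (abs_nonneg a),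
    mul_one_div_cancel hp.ne', rpow_one]

lemma pnorm_sq_add_mul_pnorm_sq_rpow_le (hp1 : 1 ≤ p) (hp2 : p ≤ 2) (x y : Fin t → ℝ) :
    (pnorm p x ^ 2 + (p - 1) * pnorm p y ^ 2) ^ (p / 2) ≤
      ∑ i, (x i ^ 2 + (p - 1) * y i ^ 2) ^ (p / 2) := by
  have hp0 : 0 < p := by linarith
  have hq : 0 ≤ p - 1 := by linarith
  have habs : ∀ a : ℝ, (|a| ^ p) ^ (2 / p) = a ^ 2 := fun a => by
    rw [rpow_rpow_div_cancel (abs_nonneg a) hp0.ne', rpow_two, sq_abs]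
  have hcoef : ((p - 1) ^ (p / 2)) ^ (2 / p) = p - 1 := by
    rw [← rpow_mul hq, div_mul_div_comm, mul_comm p, div_self (by positivity), rpow_one]
  have h := Lp_pair_sum_le_sum_Lp_pair univ (r := 2 / p) (by rw [le_div_iff₀ hp0]; linarith)
    (f := fun i => |x i| ^ p) (g := fun i => (p - 1) ^ (p / 2) * |y i| ^ p)
    (fun i => by positivity) (fun i => by positivity)
  simp only [← mul_sum, one_div_div] at h
  rw [mul_rpow (by positivity) (by positivity), hcoef, ← pnorm_sq, ← pnorm_sq] at h
  simpa only [mul_rpow (rpow_nonneg hq _) (rpow_nonneg (abs_nonneg _) _), hcoef, habs] using h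

theorem pnorm_sq_add_mul_pnorm_sq_le (hp1 : 1 ≤ p) (hp2 : p ≤ 2) (x y : Fin t → ℝ) :
    pnorm p x ^ 2 + (p - 1) * pnorm p y ^ 2 ≤ (pnorm p (x + y) ^ 2 + pnorm p (x - y) ^ 2) / 2 := by
  have hp0 : 0 < p := by linarith
  have hE : 0 ≤ pnorm p x ^ 2 + (p - 1) * pnorm p y ^ 2 :=
    add_nonneg (sq_nonneg _) (mul_nonneg (by linarith) (sq_nonneg _))
  have hmid : (pnorm p x ^ 2 + (p - 1) * pnorm p y ^ 2) ^ (p / 2) ≤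
      (pnorm p (x + y) ^ p + pnorm p (x - y) ^ p) / 2 :=
    calc _ ≤ ∑ i, (x i ^ 2 + (p - 1) * y i ^ 2) ^ (p / 2) :=
          pnorm_sq_add_mul_pnorm_sq_rpow_le hp1 hp2 x y
      _ ≤ ∑ i, (|x i + y i| ^ p + |x i - y i| ^ p) / 2 :=
          sum_le_sum fun i _ => sq_add_mul_sq_rpow_le hp1 hp2 (x i) (y i)
      _ = _ := by
          rw [pnorm_rpow hp0.ne', pnorm_rpow hp0.ne', ← sum_add_distrib, sum_div]; rfl
  calc pnorm p x ^ 2 + (p - 1) * pnorm p y ^ 2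
      = ((pnorm p x ^ 2 + (p - 1) * pnorm p y ^ 2) ^ (p / 2)) ^ (2 / p) := by
        rw [← rpow_mul hE, div_mul_div_comm, mul_comm p, div_self (by positivity), rpow_one]
    _ ≤ ((pnorm p (x + y) ^ p + pnorm p (x - y) ^ p) / 2) ^ (2 / p) := by gcongr
    _ ≤ ((pnorm p (x + y) ^ p) ^ (2 / p) + (pnorm p (x - y) ^ p) ^ (2 / p)) / 2 :=
        add_div_two_rpow_le (rpow_nonneg (pnorm_nonneg _) _) (rpow_nonneg (pnorm_nonneg _) _)
          (by rw [le_div_iff₀ hp0]; linarith)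
    _ = (pnorm p (x + y) ^ 2 + pnorm p (x - y) ^ 2) / 2 := by
        rw [rpow_rpow_div_cancel (pnorm_nonneg _) hp0.ne',
          rpow_rpow_div_cancel (pnorm_nonneg _) hp0.ne', rpow_two, rpow_two]

end pnorm

theorem far_balls_intersection_small_general (p : ℝ) (hp1 : 1 < p) (hp2 : p ≤ 2) (t : ℕ)
    (w c : ℝ) (hw : 0 < w) (hc : 0 < c)
    (x' y' : Fin t → ℝ) (hxy : c ≤ pnorm p (x' - y')) :
    ballp p x' w ∩ ballp p y' w ⊆
      ballp p ((x' + y') / 2) (w * Real.sqrt (1 - (p - 1) * c ^ 2 / (4 * w ^ 2))) := by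
  rintro z ⟨hzx, hzy⟩
  have hconv := pnorm_sq_add_mul_pnorm_sq_le hp1.le hp2
    (z - (x' + y') / 2) ((1 / 2 : ℝ) • (x' - y'))
  rw [show z - (x' + y') / 2 + (1 / 2 : ℝ) • (x' - y') = z - y' by ext; simp; ring,
    show z - (x' + y') / 2 - (1 / 2 : ℝ) • (x' - y') = z - x' by ext; simp; ring] at hconv
  have hhalf : c / 2 ≤ pnorm p ((1 / 2 : ℝ) • (x' - y')) := by
    rw [pnorm_smul (by linarith), abs_of_pos one_half_pos]; linarith
  have hcenter : pnorm p (z - (x' + y') / 2) ^ 2 ≤ w ^ 2 - (p - 1) * c ^ 2 / 4 := by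
    nlinarith [pow_le_pow_left₀ (pnorm_nonneg _) hzx 2, pow_le_pow_left₀ (pnorm_nonneg _) hzy 2,
      pow_le_pow_left₀ (by positivity) hhalf 2]
  have hradius : w * √(1 - (p - 1) * c ^ 2 / (4 * w ^ 2)) = √(w ^ 2 - (p - 1) * c ^ 2 / 4) := by
    rw [← sqrt_sq hw.le, ← sqrt_mul (sq_nonneg w), sqrt_sq hw.le]
    congr 1; field_simp
  show pnorm p (z - (x' + y') / 2) ≤ _
  rw [hradius]
  exact (le_abs_self _).trans (abs_le_sqrt hcenter)

theorem far_balls_intersection_small (p : ℝ) (hp1 : 1 < p) (hp2 : p ≤ 2) (t : ℕ)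
    (w c : ℝ) (hw : 0 < w) (hc : 0 < c) (hcw : (p - 1) * c ^ 2 / 4 ≤ w ^ 2)
    (x' y' : Fin t → ℝ) (hxy : c ≤ pnorm p (x' - y')) :
    ballp p x' w ∩ ballp p y' w ⊆
      ballp p ((x' + y') / 2) (w * Real.sqrt (1 - (p - 1) * c ^ 2 / (4 * w ^ 2))) :=
  far_balls_intersection_small_general p hp1 hp2 t w c hw hc x' y' hxy
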